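/- (Axioms hold for CCSKP) The LTSI of CCSKP, with independence t1 ι t2 iff t1 and t2 are connected and label(t1) ι label(t2), satisfies SP, BTI, WF, PCI, IRE and RPI; in particular it is a pre-reversible LTSI. -/
import Mathlib


namespace CCSKP

/-- Action labels: names, co-names and τ. -/
inductive Act : Type where
  | name (a : ℕ)
  | coname (a : ℕ)
  | tau
deriving DecidableEq

/-- Complement of an action label. -/
def Act.bar : Act → Act
  | .name a => .coname a
  | .coname a => .name a
  | .tau => .tau

/-- Directions Left / Right. -/
inductive Dir : Type where
  | L
  | R
deriving DecidableEq

/-- The opposite direction. -/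
def Dir.op : Dir → Dir
  | .L => .R
  | .R => .L

/-- Selection according to a direction. -/
def Dir.sel {α : Type*} : Dir → α → α → α
  | .L, x, _ => x
  | .R, _, y => y

/-- Keys. -/
abbrev Key := ℕ

/-- CCSK processes. -/
inductive Proc : Type where
  | nil
  | pre (α : Act) (X : Proc)
  | res (X : Proc) (a : ℕ)
  | sum (X Y : Proc)
  | par (X Y : Proc)
  | keyed (α : Act) (k : Key) (X : Proc)
deriving DecidableEq

/-- The set of keys occurring in a process. -/
def Proc.keys : Proc → Finset Key
  | .nil => ∅
  | .pre _ X => X.keys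
  | .res X _ => X.keys
  | .sum X Y => X.keys ∪ Y.keys
  | .par X Y => X.keys ∪ Y.keys
  | .keyed _ k X => insert k X.keys

/-- Standard processes: no keys. -/
def Proc.Std (X : Proc) : Prop := X.keys = ∅

/-- Proof keyed labels. -/
inductive PLab : Type where
  | act (α : Act) (k : Key)
  | par (d : Dir) (θ : PLab)
  | sum (d : Dir) (θ : PLab)
  | syn (θL θR : PLab)
deriving DecidableEq

/-- The action ℓ(θ) of a proof keyed label. -/
def PLab.lab : PLab → Act
  | .act α _ => α
  | .par _ θ => θ.lab
  | .sum _ θ => θ.lab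
  | .syn _ _ => .tau

/-- The key of a proof keyed label. -/
def PLab.key : PLab → Key
  | .act _ k => k
  | .par _ θ => θ.key
  | .sum _ θ => θ.key
  | .syn θL _ => θL.key

/-- θ is of the form υ α[k] (no synchronisation pair). -/
def PLab.IsPre : PLab → Prop
  | .act _ _ => True
  | .par _ θ => θ.IsPre
  | .sum _ θ => θ.IsPre
  | .syn _ _ => False

/-- Forward transitions of CCSKP. -/
inductive Fwd : Proc → PLab → Proc → Prop where
  | act {α : Act} {X : Proc} {k : Key} :
      X.keys = ∅ → Fwd (.pre α X) (.act α k) (.keyed α k X)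
  | pre {X X' : Proc} {θ : PLab} {α : Act} {k : Key} :
      Fwd X θ X' → θ.key ≠ k → Fwd (.keyed α k X) θ (.keyed α k X')
  | res {X X' : Proc} {θ : PLab} {a : ℕ} :
      Fwd X θ X' → θ.lab ≠ .name a → θ.lab ≠ .coname a →
      Fwd (.res X a) θ (.res X' a)
  | parL {X X' Y : Proc} {θ : PLab} :
      Fwd X θ X' → θ.key ∉ Y.keys → Fwd (.par X Y) (.par .L θ) (.par X' Y)
  | parR {X Y Y' : Proc} {θ : PLab} :
      Fwd Y θ Y' → θ.key ∉ X.keys → Fwd (.par X Y) (.par .R θ) (.par X Y')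
  | syn {X X' Y Y' : Proc} {θ1 θ2 : PLab} :
      Fwd X θ1 X' → Fwd Y θ2 Y' → θ1.IsPre → θ2.IsPre → θ1.lab ≠ .tau →
      θ2.lab = θ1.lab.bar → θ2.key = θ1.key →
      Fwd (.par X Y) (.syn θ1 θ2) (.par X' Y')
  | sumL {X X' Y : Proc} {θ : PLab} :
      Fwd X θ X' → Y.keys = ∅ → Fwd (.sum X Y) (.sum .L θ) (.sum X' Y)
  | sumR {X Y Y' : Proc} {θ : PLab} :
      Fwd Y θ Y' → X.keys = ∅ → Fwd (.sum X Y) (.sum .R θ) (.sum X Y')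

/-- Backward transitions of CCSKP: the exactly symmetric rules. -/
inductive Bwd : Proc → PLab → Proc → Prop where
  | act {α : Act} {X : Proc} {k : Key} :
      X.keys = ∅ → Bwd (.keyed α k X) (.act α k) (.pre α X)
  | pre {X' X : Proc} {θ : PLab} {α : Act} {k : Key} :
      Bwd X' θ X → θ.key ≠ k → Bwd (.keyed α k X') θ (.keyed α k X)
  | res {X' X : Proc} {θ : PLab} {a : ℕ} :
      Bwd X' θ X → θ.lab ≠ .name a → θ.lab ≠ .coname a →
      Bwd (.res X' a) θ (.res X a)
  | parL {X' X Y : Proc} {θ : PLab} :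
      Bwd X' θ X → θ.key ∉ Y.keys → Bwd (.par X' Y) (.par .L θ) (.par X Y)
  | parR {X Y' Y : Proc} {θ : PLab} :
      Bwd Y' θ Y → θ.key ∉ X.keys → Bwd (.par X Y') (.par .R θ) (.par X Y)
  | syn {X' X Y' Y : Proc} {θ1 θ2 : PLab} :
      Bwd X' θ1 X → Bwd Y' θ2 Y → θ1.IsPre → θ2.IsPre → θ1.lab ≠ .tau →
      θ2.lab = θ1.lab.bar → θ2.key = θ1.key →
      Bwd (.par X' Y') (.syn θ1 θ2) (.par X Y)
  | sumL {X' X Y : Proc} {θ : PLab} :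
      Bwd X' θ X → Y.keys = ∅ → Bwd (.sum X' Y) (.sum .L θ) (.sum X Y)
  | sumR {X Y' Y : Proc} {θ : PLab} :
      Bwd Y' θ Y → X.keys = ∅ → Bwd (.sum X Y') (.sum .R θ) (.sum X Y)

/-- A combined step: forward if `d = true`, backward if `d = false`. -/
def Step (X : Proc) (d : Bool) (θ : PLab) (Y : Proc) : Prop :=
  if d then Fwd X θ Y else Bwd X θ Y

/-- Transitions of CCSKP (forward or backward). -/
structure Tr : Type where
  src : Proc
  fwd? : Bool
  lbl : PLab
  tgt : Proc
deriving DecidableEq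

/-- A transition is valid if it is derivable in the LTS. -/
def Tr.Valid (t : Tr) : Prop := Step t.src t.fwd? t.lbl t.tgt

/-- The reverse of a transition. -/
def Tr.rev (t : Tr) : Tr := ⟨t.tgt, !t.fwd?, t.lbl, t.src⟩

/-- The key of a transition. -/
def Tr.key (t : Tr) : Key := t.lbl.key

/-- Existence of a path between two processes. -/
inductive Reach : Proc → Proc → Prop where
  | refl (X : Proc) : Reach X X
  | step {X Y Z : Proc} {d : Bool} {θ : PLab} :
      Step X d θ Y → Reach Y Z → Reach X Z

/-- t is connected to u: there is a path from the source of t to the target of u. -/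
def Tr.ConnectedTo (t u : Tr) : Prop := Reach t.src u.tgt

/-- t and u are connected. -/
def Tr.Connected (t u : Tr) : Prop := t.ConnectedTo u ∨ u.ConnectedTo t

/-- X cannot perform a backward transition. -/
def Rooted (X : Proc) : Prop := ∀ (θ : PLab) (Y : Proc), ¬ Bwd X θ Y

/-- Reachable processes: target of a rooted path from a standard origin. -/
def Reachable (X : Proc) : Prop := ∃ O : Proc, O.Std ∧ Rooted O ∧ Reach O X

/-- The connectivity relation ⌢ on proof keyed labels. -/
inductive Conn : PLab → PLab → Prop where
  | a1 {α : Act} {k : Key} {θ : PLab} : Conn (.act α k) θ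
  | a2 {θ : PLab} {α : Act} {k : Key} :
      (∀ (β : Act) (k' : Key), θ ≠ .act β k') → Conn θ (.act α k)
  | c1 {d : Dir} {θ θ' : PLab} : Conn θ θ' → Conn (.sum d θ) (.sum d θ')
  | c2 {d : Dir} {θ θ' : PLab} : Conn (.sum d θ) (.sum d.op θ')
  | p1 {d : Dir} {θ θ' : PLab} : Conn θ θ' → Conn (.par d θ) (.par d θ')
  | p2 {d : Dir} {θ θ' : PLab} : Conn (.par d θ) (.par d.op θ')
  | s1 {d : Dir} {θ θL θR : PLab} : Conn θ (d.sel θL θR) → Conn (.par d θ) (.syn θL θR)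
  | s2 {d : Dir} {θ θL θR : PLab} : Conn (d.sel θL θR) θ → Conn (.syn θL θR) (.par d θ)
  | s3 {θ1 θ2 θ1' θ2' : PLab} : Conn θ1 θ1' → Conn θ2 θ2' → Conn (.syn θ1 θ2) (.syn θ1' θ2')

/-- The dependence relation ⊙ on proof keyed labels. -/
inductive Dep : PLab → PLab → Prop where
  | a1 {α : Act} {k : Key} {θ : PLab} : Dep (.act α k) θ
  | a2 {θ : PLab} {α : Act} {k : Key} :
      (∀ (β : Act) (k' : Key), θ ≠ .act β k') → Dep θ (.act α k)
  | c1 {d : Dir} {θ θ' : PLab} : Dep θ θ' → Dep (.sum d θ) (.sum d θ')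
  | c2 {d : Dir} {θ θ' : PLab} : Dep (.sum d θ) (.sum d.op θ')
  | p1 {d : Dir} {θ θ' : PLab} : Dep θ θ' → Dep (.par d θ) (.par d θ')
  | p2k {d : Dir} {θ θ' : PLab} : θ.key = θ'.key → Dep (.par d θ) (.par d.op θ')
  | s1 {d : Dir} {θ θL θR : PLab} : Dep θ (d.sel θL θR) → Dep (.par d θ) (.syn θL θR)
  | s2 {d : Dir} {θ θL θR : PLab} : Dep (d.sel θL θR) θ → Dep (.syn θL θR) (.par d θ)
  | s3a {θ1 θ2 θ1' θ2' : PLab} : Dep θ1 θ1' → Conn θ2 θ2' → Dep (.syn θ1 θ2) (.syn θ1' θ2')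
  | s3b {θ1 θ2 θ1' θ2' : PLab} : Conn θ1 θ1' → Dep θ2 θ2' → Dep (.syn θ1 θ2) (.syn θ1' θ2')

/-- The independence relation ι on proof keyed labels. -/
inductive Ind : PLab → PLab → Prop where
  | c1 {d : Dir} {θ θ' : PLab} : Ind θ θ' → Ind (.sum d θ) (.sum d θ')
  | p1 {d : Dir} {θ θ' : PLab} : Ind θ θ' → Ind (.par d θ) (.par d θ')
  | p2k {d : Dir} {θ θ' : PLab} : θ.key ≠ θ'.key → Ind (.par d θ) (.par d.op θ')
  | s1 {d : Dir} {θ θL θR : PLab} : Ind θ (d.sel θL θR) → Ind (.par d θ) (.syn θL θR)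
  | s2 {d : Dir} {θ θL θR : PLab} : Ind (d.sel θL θR) θ → Ind (.syn θL θR) (.par d θ)
  | s3 {θ1 θ2 θ1' θ2' : PLab} : Ind θ1 θ1' → Ind θ2 θ2' → Ind (.syn θ1 θ2) (.syn θ1' θ2')

/-- Independence of transitions: connected transitions with independent labels. -/
def Tr.ind (t u : Tr) : Prop := t.Valid ∧ u.Valid ∧ t.Connected u ∧ Ind t.lbl u.lbl

/-- Dependence of transitions: connected transitions with dependent labels. -/
def Tr.dep (t u : Tr) : Prop := t.Valid ∧ u.Valid ∧ t.Connected u ∧ Dep t.lbl u.lbl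

end CCSKP

namespace CCSKP

/-- A commuting square of transitions: t, u coinitial; u', t' the opposite sides. -/
def Square (t u u' t' : Tr) : Prop :=
  t.Valid ∧ u.Valid ∧ u'.Valid ∧ t'.Valid ∧
  t.src = u.src ∧ u'.src = t.tgt ∧ t'.src = u.tgt ∧ u'.tgt = t'.tgt ∧
  u'.lbl = u.lbl ∧ u'.fwd? = u.fwd? ∧ t'.lbl = t.lbl ∧ t'.fwd? = t.fwd?

/-- Event equivalence: the smallest equivalence such that in a commuting square
with independent sides, `t ∼ t'` and `reverse t ∼ t'`. -/
inductive EvEq : Tr → Tr → Prop where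
  | refl (t : Tr) : EvEq t t
  | symm {t u : Tr} : EvEq t u → EvEq u t
  | trans {t u v : Tr} : EvEq t u → EvEq u v → EvEq t v
  | sq {t u u' t' : Tr} : Square t u u' t' → t.ind u → EvEq t t'
  | sqrev {t u u' t' : Tr} : Square t u u' t' → t.ind u → EvEq t.rev t'

/-- Paths between processes. -/
inductive Path : Proc → Proc → Type where
  | nil (X : Proc) : Path X X
  | cons {X Y Z : Proc} (t : Tr) (hv : t.Valid) (hs : t.src = X) (ht : t.tgt = Y)
      (r : Path Y Z) : Path X Z

open Classical in
/-- Signed number of occurrences in a path of the event represented by `e`. -/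
noncomputable def Path.count (e : Tr) : ∀ {X Y : Proc}, Path X Y → ℤ
  | _, _, .nil _ => 0
  | _, _, .cons t _ _ _ r =>
      (if EvEq t e then (1 : ℤ) else if EvEq t e.rev then (-1 : ℤ) else 0) + Path.count e r

/-- Membership of a transition in a path. -/
def Path.Mem (u : Tr) : ∀ {X Y : Proc}, Path X Y → Prop
  | _, _, .nil _ => False
  | _, _, .cons t _ _ _ r => u = t ∨ Path.Mem u r

/-- Length of a path. -/
def Path.length : ∀ {X Y : Proc}, Path X Y → ℕ
  | _, _, .nil _ => 0
  | _, _, .cons _ _ _ _ r => Path.length r + 1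

/-- `e` represents a forward event belonging to ev(X). -/
def InEv (X : Proc) (e : Tr) : Prop :=
  e.Valid ∧ e.fwd? = true ∧
  ∃ (O : Proc) (r : Path O X), Rooted O ∧ 0 < Path.count e r

/-- Causal ordering on (representatives of) forward events. -/
def CausLE (e e' : Tr) : Prop :=
  ∀ (O Z : Proc) (r : Path O Z), Rooted O → 0 < Path.count e' r → 0 < Path.count e r

/-- Strict causal ordering on (representatives of) forward events. -/
def EvLT (e e' : Tr) : Prop := CausLE e e' ∧ ¬ EvEq e e'

/-- Core independence on events. -/
def CoreInd (e e' : Tr) : Prop :=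
  ∃ t t' : Tr, EvEq t e ∧ EvEq t' e' ∧ t.src = t'.src ∧ t.ind t'

/-- Independence on events. -/
def EvInd (e e' : Tr) : Prop := ∃ t t' : Tr, EvEq t e ∧ EvEq t' e' ∧ t.ind t'

/-- Dependence on events. -/
def EvDep (e e' : Tr) : Prop :=
  ∃ t t' : Tr, EvEq t e ∧ EvEq t' e' ∧ t.Valid ∧ t'.Valid ∧ Dep t.lbl t'.lbl

/-- Connected events. -/
def EvConnected (e e' : Tr) : Prop :=
  ∃ t t' : Tr, EvEq t e ∧ EvEq t' e' ∧ t.Valid ∧ t'.Valid ∧ t.Connected t'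

/-- Composable events. -/
def EvComposable (e e' : Tr) : Prop :=
  ∃ t t' : Tr, EvEq t e ∧ EvEq t' e' ∧ t.Valid ∧ t'.Valid ∧ t.tgt = t'.src

/-- The forward version of a transition. -/
def Tr.fwdOf (t : Tr) : Tr := if t.fwd? then t else t.rev

/-- Event key equivalence on forward transitions: same key, and a path between the
targets avoiding that key. -/
def KeyEqF (t1 t2 : Tr) : Prop :=
  t1.key = t2.key ∧ ∃ r : Path t1.tgt t2.tgt, ∀ u : Tr, Path.Mem u r → u.key ≠ t1.key

/-- Event key equivalence on arbitrary transitions. -/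
def KeyEq (t1 t2 : Tr) : Prop := KeyEqF t1.fwdOf t2.fwdOf

/-- The generator ord(X) of the key ordering. -/
def ordRel : Proc → Key → Key → Prop
  | .nil, _, _ => False
  | .pre _ X, m, n => ordRel X m n
  | .res X _, m, n => ordRel X m n
  | .sum X Y, m, n => ordRel X m n ∨ ordRel Y m n
  | .par X Y, m, n => ordRel X m n ∨ ordRel Y m n
  | .keyed _ k X, m, n => ordRel X m n ∨ (m = k ∧ n ∈ X.keys)

/-- Key ordering ≤_X : reflexive transitive closure of ord(X). -/
def keyLE (X : Proc) : Key → Key → Prop := Relation.ReflTransGen (ordRel X)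

end CCSKP

namespace CCSKP

/-! ### Auxiliary lemmas -/

section Aux

/-- Loop lemma, one direction. -/
lemma fwd_bwd {X Y : Proc} {θ : PLab} (h : Fwd X θ Y) : Bwd Y θ X := by
  induction h with
  | act h => exact .act h
  | pre _ hk ih => exact .pre ih hk
  | res _ h1 h2 ih => exact .res ih h1 h2
  | parL _ hk ih => exact .parL ih hk
  | parR _ hk ih => exact .parR ih hk
  | syn _ _ h1 h2 h3 h4 h5 ih1 ih2 => exact .syn ih1 ih2 h1 h2 h3 h4 h5
  | sumL _ hk ih => exact .sumL ih hk
  | sumR _ hk ih => exact .sumR ih hk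

/-- Loop lemma, other direction. -/
lemma bwd_fwd {X Y : Proc} {θ : PLab} (h : Bwd X θ Y) : Fwd Y θ X := by
  induction h with
  | act h => exact .act h
  | pre _ hk ih => exact .pre ih hk
  | res _ h1 h2 ih => exact .res ih h1 h2
  | parL _ hk ih => exact .parL ih hk
  | parR _ hk ih => exact .parR ih hk
  | syn _ _ h1 h2 h3 h4 h5 ih1 ih2 => exact .syn ih1 ih2 h1 h2 h3 h4 h5
  | sumL _ hk ih => exact .sumL ih hk
  | sumR _ hk ih => exact .sumR ih hk

lemma step_true {X Y : Proc} {θ : PLab} : Step X true θ Y ↔ Fwd X θ Y := by simp [Step]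

lemma step_false {X Y : Proc} {θ : PLab} : Step X false θ Y ↔ Bwd X θ Y := by simp [Step]

lemma Step.rev {X Y : Proc} {b : Bool} {θ : PLab} (h : Step X b θ Y) :
    Step Y (!b) θ X := by
  cases b
  · exact step_true.mpr (bwd_fwd (step_false.mp h))
  · exact step_false.mpr (fwd_bwd (step_true.mp h))

lemma Tr.rev_valid {t : Tr} (h : t.Valid) : t.rev.Valid := Step.rev h

/-- Keys of the source and target of a forward transition. -/
lemma fwd_keys {X Y : Proc} {θ : PLab} (h : Fwd X θ Y) :
    θ.key ∉ X.keys ∧ Y.keys = insert θ.key X.keys := by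
  induction h with
  | act h => simp [Proc.keys, PLab.key, h]
  | @pre X X' θ α k _ hk ih =>
      refine ⟨by simp [Proc.keys, hk, ih.1], ?_⟩
      simp [Proc.keys, ih.2, Finset.insert_comm]
  | res _ _ _ ih => exact ih
  | @parL X X' Y θ _ hk ih =>
      refine ⟨by simp [Proc.keys, PLab.key, hk, ih.1], ?_⟩
      simp [Proc.keys, PLab.key, ih.2, Finset.insert_union]
  | @parR X Y Y' θ _ hk ih =>
      refine ⟨by simp [Proc.keys, PLab.key, hk, ih.1], ?_⟩
      simp [Proc.keys, PLab.key, ih.2, Finset.union_insert]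
  | @syn X X' Y Y' θ1 θ2 _ _ _ _ _ _ hkk ih1 ih2 =>
      refine ⟨by
        simp only [Proc.keys, PLab.key, Finset.mem_union, not_or]
        exact ⟨ih1.1, hkk ▸ ih2.1⟩, ?_⟩
      have h2 := ih2.2
      rw [hkk] at h2
      simp [Proc.keys, PLab.key, ih1.2, h2, Finset.insert_union, Finset.union_insert]
  | @sumL X X' Y θ _ hk ih =>
      refine ⟨by simp [Proc.keys, PLab.key, hk, ih.1], ?_⟩
      simp [Proc.keys, PLab.key, ih.2, hk]
  | @sumR X Y Y' θ _ hk ih =>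
      refine ⟨by simp [Proc.keys, PLab.key, hk, ih.1], ?_⟩
      simp [Proc.keys, PLab.key, ih.2, hk]

/-- Keys of the source and target of a backward transition. -/
lemma bwd_keys {X Y : Proc} {θ : PLab} (h : Bwd X θ Y) :
    θ.key ∉ Y.keys ∧ X.keys = insert θ.key Y.keys := fwd_keys (bwd_fwd h)

lemma step_keys_sub {X Y : Proc} {b : Bool} {θ : PLab} (h : Step X b θ Y) :
    Y.keys ⊆ insert θ.key X.keys := by
  cases b
  · have := (bwd_keys (step_false.mp h)).2
    intro x hx
    exact Finset.mem_insert_of_mem (this ▸ Finset.mem_insert_of_mem hx)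
  · exact (fwd_keys (step_true.mp h)).2 ▸ le_refl _

lemma bwd_key_mem {X Y : Proc} {θ : PLab} (h : Bwd X θ Y) : θ.key ∈ X.keys := by
  rw [(bwd_keys h).2]; exact Finset.mem_insert_self _ _

/-- Balanced labels: synchronisation pairs have matching keys. -/
def PLab.Bal : PLab → Prop
  | .act _ _ => True
  | .par _ θ => θ.Bal
  | .sum _ θ => θ.Bal
  | .syn θ1 θ2 => θ2.key = θ1.key ∧ θ1.Bal ∧ θ2.Bal

lemma fwd_bal {X Y : Proc} {θ : PLab} (h : Fwd X θ Y) : θ.Bal := by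
  induction h with
  | act _ => trivial
  | pre _ _ ih => exact ih
  | res _ _ _ ih => exact ih
  | parL _ _ ih => exact ih
  | parR _ _ ih => exact ih
  | syn _ _ _ _ _ _ hk ih1 ih2 => exact ⟨hk, ih1, ih2⟩
  | sumL _ _ ih => exact ih
  | sumR _ _ ih => exact ih

lemma step_bal {X Y : Proc} {b : Bool} {θ : PLab} (h : Step X b θ Y) : θ.Bal := by
  cases b
  · exact fwd_bal (bwd_fwd (step_false.mp h))
  · exact fwd_bal (step_true.mp h)

/-- Independent balanced labels have different keys. -/
lemma ind_key_ne {θ θ' : PLab} (h : Ind θ θ') (hb : θ.Bal) (hb' : θ'.Bal) :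
    θ.key ≠ θ'.key := by
  induction h with
  | c1 _ ih => exact ih hb hb'
  | p1 _ ih => exact ih hb hb'
  | p2k hk => exact hk
  | @s1 d θ θL θR _ ih =>
      cases d
      · exact ih hb hb'.2.1
      · have := ih hb hb'.2.2
        simp only [Dir.sel] at this
        simpa [PLab.key, ← hb'.1] using this
  | @s2 d θ θL θR _ ih =>
      cases d
      · exact ih hb.2.1 hb'
      · have := ih hb.2.2 hb'
        simp only [Dir.sel] at this
        simpa [PLab.key, ← hb.1] using this
  | s3 _ _ ih1 _ => exact ih1 hb.2.1 hb'.2.1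

/-- Independent labels are distinct. -/
lemma ind_ne {θ θ' : PLab} (h : Ind θ θ') : θ ≠ θ' := by
  induction h with
  | c1 _ ih => intro e; injection e with e1 e2; exact ih e2
  | p1 _ ih => intro e; injection e with e1 e2; exact ih e2
  | @p2k d _ _ _ => intro e; injection e with e1 _; cases d <;> simp [Dir.op] at e1
  | s1 _ _ => intro e; simp at e
  | s2 _ _ => intro e; simp at e
  | s3 _ _ ih1 _ => intro e; injection e with e1 e2; exact ih1 e1

/-- Independence of labels is irreflexive. -/
lemma ind_irrefl : ∀ θ : PLab, ¬ Ind θ θ := fun _ h => ind_ne h rfl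

/-- Independence of labels is symmetric. -/
lemma ind_symm {θ θ' : PLab} (h : Ind θ θ') : Ind θ' θ := by
  induction h with
  | c1 _ ih => exact .c1 ih
  | p1 _ ih => exact .p1 ih
  | @p2k d _ _ hk => have := @Ind.p2k d.op _ _ (Ne.symm hk); cases d <;> exact this
  | s1 _ ih => exact .s2 ih
  | s2 _ ih => exact .s1 ih
  | s3 _ _ ih1 ih2 => exact .s3 ih1 ih2

/-! ### Step constructors and inversion -/

lemma Step.keyed {X X' : Proc} {b : Bool} {θ : PLab} {α : Act} {k : Key}
    (h : Step X b θ X') (hk : θ.key ≠ k) :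
    Step (.keyed α k X) b θ (.keyed α k X') := by
  cases b
  · exact step_false.mpr (.pre (step_false.mp h) hk)
  · exact step_true.mpr (.pre (step_true.mp h) hk)

lemma Step.res' {X X' : Proc} {b : Bool} {θ : PLab} {a : ℕ}
    (h : Step X b θ X') (h1 : θ.lab ≠ .name a) (h2 : θ.lab ≠ .coname a) :
    Step (.res X a) b θ (.res X' a) := by
  cases b
  · exact step_false.mpr (.res (step_false.mp h) h1 h2)
  · exact step_true.mpr (.res (step_true.mp h) h1 h2)

lemma Step.parL' {X X' Y : Proc} {b : Bool} {θ : PLab}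
    (h : Step X b θ X') (hk : θ.key ∉ Y.keys) :
    Step (.par X Y) b (.par .L θ) (.par X' Y) := by
  cases b
  · exact step_false.mpr (.parL (step_false.mp h) hk)
  · exact step_true.mpr (.parL (step_true.mp h) hk)

lemma Step.parR' {X Y Y' : Proc} {b : Bool} {θ : PLab}
    (h : Step Y b θ Y') (hk : θ.key ∉ X.keys) :
    Step (.par X Y) b (.par .R θ) (.par X Y') := by
  cases b
  · exact step_false.mpr (.parR (step_false.mp h) hk)
  · exact step_true.mpr (.parR (step_true.mp h) hk)

lemma Step.syn' {X X' Y Y' : Proc} {b : Bool} {θ1 θ2 : PLab}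
    (hx : Step X b θ1 X') (hy : Step Y b θ2 Y') (hp1 : θ1.IsPre) (hp2 : θ2.IsPre)
    (ht : θ1.lab ≠ .tau) (hbar : θ2.lab = θ1.lab.bar) (hk : θ2.key = θ1.key) :
    Step (.par X Y) b (.syn θ1 θ2) (.par X' Y') := by
  cases b
  · exact step_false.mpr (.syn (step_false.mp hx) (step_false.mp hy) hp1 hp2 ht hbar hk)
  · exact step_true.mpr (.syn (step_true.mp hx) (step_true.mp hy) hp1 hp2 ht hbar hk)

lemma Step.sumL' {X X' Y : Proc} {b : Bool} {θ : PLab}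
    (h : Step X b θ X') (hk : Y.keys = ∅) :
    Step (.sum X Y) b (.sum .L θ) (.sum X' Y) := by
  cases b
  · exact step_false.mpr (.sumL (step_false.mp h) hk)
  · exact step_true.mpr (.sumL (step_true.mp h) hk)

lemma Step.sumR' {X Y Y' : Proc} {b : Bool} {θ : PLab}
    (h : Step Y b θ Y') (hk : X.keys = ∅) :
    Step (.sum X Y) b (.sum .R θ) (.sum X Y') := by
  cases b
  · exact step_false.mpr (.sumR (step_false.mp h) hk)
  · exact step_true.mpr (.sumR (step_true.mp h) hk)

lemma step_nil_inv {b : Bool} {θ : PLab} {Y : Proc} (h : Step .nil b θ Y) : False := by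
  cases b
  · cases step_false.mp h
  · cases step_true.mp h

lemma step_pre_inv {α : Act} {X : Proc} {b : Bool} {θ : PLab} {Y : Proc}
    (h : Step (.pre α X) b θ Y) : ∃ k, θ = .act α k := by
  cases b
  · cases step_false.mp h
  · cases step_true.mp h with
    | act _ => exact ⟨_, rfl⟩

lemma step_keyed_inv {α : Act} {k : Key} {X : Proc} {b : Bool} {θ : PLab} {Y : Proc}
    (h : Step (.keyed α k X) b θ Y) :
    θ = .act α k ∨ ∃ X', Y = .keyed α k X' ∧ Step X b θ X' ∧ θ.key ≠ k := by
  cases b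
  · cases step_false.mp h with
    | act _ => exact .inl rfl
    | pre h2 hk2 => exact .inr ⟨_, rfl, step_false.mpr h2, hk2⟩
  · cases step_true.mp h with
    | pre h2 hk2 => exact .inr ⟨_, rfl, step_true.mpr h2, hk2⟩

lemma step_res_inv {a : ℕ} {X : Proc} {b : Bool} {θ : PLab} {Y : Proc}
    (h : Step (.res X a) b θ Y) :
    ∃ X', Y = .res X' a ∧ Step X b θ X' ∧ θ.lab ≠ .name a ∧ θ.lab ≠ .coname a := by
  cases b
  · cases step_false.mp h with
    | res h3 h4 h5 => exact ⟨_, rfl, step_false.mpr h3, h4, h5⟩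
  · cases step_true.mp h with
    | res h3 h4 h5 => exact ⟨_, rfl, step_true.mpr h3, h4, h5⟩

lemma step_sum_inv {A B : Proc} {b : Bool} {θ : PLab} {Y : Proc}
    (h : Step (.sum A B) b θ Y) :
    (∃ σ A', θ = .sum .L σ ∧ Y = .sum A' B ∧ Step A b σ A' ∧ B.keys = ∅) ∨
    (∃ σ B', θ = .sum .R σ ∧ Y = .sum A B' ∧ Step B b σ B' ∧ A.keys = ∅) := by
  cases b
  · cases step_false.mp h with
    | sumL h2 hk2 => exact .inl ⟨_, _, rfl, rfl, step_false.mpr h2, hk2⟩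
    | sumR h2 hk2 => exact .inr ⟨_, _, rfl, rfl, step_false.mpr h2, hk2⟩
  · cases step_true.mp h with
    | sumL h2 hk2 => exact .inl ⟨_, _, rfl, rfl, step_true.mpr h2, hk2⟩
    | sumR h2 hk2 => exact .inr ⟨_, _, rfl, rfl, step_true.mpr h2, hk2⟩

lemma step_par_inv {A B : Proc} {b : Bool} {θ : PLab} {Y : Proc}
    (h : Step (.par A B) b θ Y) :
    (∃ σ A', θ = .par .L σ ∧ Y = .par A' B ∧ Step A b σ A' ∧ σ.key ∉ B.keys) ∨
    (∃ σ B', θ = .par .R σ ∧ Y = .par A B' ∧ Step B b σ B' ∧ σ.key ∉ A.keys) ∨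
    (∃ σ1 σ2 A' B', θ = .syn σ1 σ2 ∧ Y = .par A' B' ∧ Step A b σ1 A' ∧ Step B b σ2 B' ∧
      σ1.IsPre ∧ σ2.IsPre ∧ σ1.lab ≠ .tau ∧ σ2.lab = σ1.lab.bar ∧ σ2.key = σ1.key) := by
  cases b
  · cases step_false.mp h with
    | parL h2 hk2 => exact .inl ⟨_, _, rfl, rfl, step_false.mpr h2, hk2⟩
    | parR h2 hk2 => exact .inr (.inl ⟨_, _, rfl, rfl, step_false.mpr h2, hk2⟩)
    | syn g1 g2 gp1 gp2 gt gbar gk =>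
        exact .inr (.inr ⟨_, _, _, _, rfl, rfl, step_false.mpr g1, step_false.mpr g2,
          gp1, gp2, gt, gbar, gk⟩)
  · cases step_true.mp h with
    | parL h2 hk2 => exact .inl ⟨_, _, rfl, rfl, step_true.mpr h2, hk2⟩
    | parR h2 hk2 => exact .inr (.inl ⟨_, _, rfl, rfl, step_true.mpr h2, hk2⟩)
    | syn g1 g2 gp1 gp2 gt gbar gk =>
        exact .inr (.inr ⟨_, _, _, _, rfl, rfl, step_true.mpr g1, step_true.mpr g2,
          gp1, gp2, gt, gbar, gk⟩)

/-! ### The square property (diamond lemma) -/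

theorem sp_core : ∀ (X : Proc) {θ1 θ2 : PLab} {b1 b2 : Bool} {Y1 Y2 : Proc},
    Ind θ1 θ2 → Step X b1 θ1 Y1 → Step X b2 θ2 Y2 →
    ∃ Z, Step Y1 b2 θ2 Z ∧ Step Y2 b1 θ1 Z := by
  intro X
  induction X with
  | nil => intro _ _ _ _ _ _ _ h1 _; exact absurd h1 step_nil_inv
  | pre α X _ =>
      intro θ1 θ2 b1 b2 Y1 Y2 hInd h1 h2
      obtain ⟨k, rfl⟩ := step_pre_inv h1
      cases hInd
  | res X a ih =>
      intro θ1 θ2 b1 b2 Y1 Y2 hInd h1 h2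
      obtain ⟨X1, rfl, s1, n1, n1'⟩ := step_res_inv h1
      obtain ⟨X2, rfl, s2, n2, n2'⟩ := step_res_inv h2
      obtain ⟨Z, z1, z2⟩ := ih hInd s1 s2
      exact ⟨.res Z a, Step.res' z1 n2 n2', Step.res' z2 n1 n1'⟩
  | keyed α k X ih =>
      intro θ1 θ2 b1 b2 Y1 Y2 hInd h1 h2
      rcases step_keyed_inv h1 with rfl | ⟨X1, rfl, s1, k1⟩
      · cases hInd
      rcases step_keyed_inv h2 with rfl | ⟨X2, rfl, s2, k2⟩
      · cases hInd
      obtain ⟨Z, z1, z2⟩ := ih hInd s1 s2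
      exact ⟨.keyed α k Z, Step.keyed z1 k2, Step.keyed z2 k1⟩
  | sum A B ihA ihB =>
      intro θ1 θ2 b1 b2 Y1 Y2 hInd h1 h2
      rcases step_sum_inv h1 with ⟨σ1, A1, rfl, rfl, s1, e1⟩ | ⟨σ1, B1, rfl, rfl, s1, e1⟩ <;>
        rcases step_sum_inv h2 with ⟨σ2, A2, rfl, rfl, s2, e2⟩ | ⟨σ2, B2, rfl, rfl, s2, e2⟩
      · cases hInd with
        | c1 hI =>
            obtain ⟨Z, z1, z2⟩ := ihA hI s1 s2
            exact ⟨.sum Z B, Step.sumL' z1 e1, Step.sumL' z2 e1⟩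
      · cases hInd
      · cases hInd
      · cases hInd with
        | c1 hI =>
            obtain ⟨Z, z1, z2⟩ := ihB hI s1 s2
            exact ⟨.sum A Z, Step.sumR' z1 e1, Step.sumR' z2 e1⟩
  | par A B ihA ihB =>
      intro θ1 θ2 b1 b2 Y1 Y2 hInd h1 h2
      rcases step_par_inv h1 with ⟨σ1, A1, rfl, rfl, s1, e1⟩ | ⟨σ1, B1, rfl, rfl, s1, e1⟩ |
          ⟨ρ1, ρ2, A1, B1, rfl, rfl, sa1, sb1, p1, p2, t1, bar1, kk1⟩ <;>
        rcases step_par_inv h2 with ⟨σ2, A2, rfl, rfl, s2, e2⟩ | ⟨σ2, B2, rfl, rfl, s2, e2⟩ |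
          ⟨ρ1', ρ2', A2, B2, rfl, rfl, sa2, sb2, p1', p2', t1', bar1', kk1'⟩
      -- L, L
      · cases hInd with
        | p1 hI =>
            obtain ⟨Z, z1, z2⟩ := ihA hI s1 s2
            exact ⟨.par Z B, Step.parL' z1 e2, Step.parL' z2 e1⟩
      -- L, R
      · cases hInd with
        | p2k hk =>
            refine ⟨.par A1 B2, Step.parR' s2 ?_, Step.parL' s1 ?_⟩
            · intro hm
              rcases Finset.mem_insert.mp (step_keys_sub s1 hm) with h | h
              · exact hk (h.symm)
              · exact e2 h
            · intro hm
              rcases Finset.mem_insert.mp (step_keys_sub s2 hm) with h | h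
              · exact hk h
              · exact e1 h
      -- L, syn
      · cases hInd with
        | s1 hI =>
            obtain ⟨Z, z1, z2⟩ := ihA hI s1 sa2
            refine ⟨.par Z B2, Step.syn' z1 sb2 p1' p2' t1' bar1' kk1', Step.parL' z2 ?_⟩
            intro hm
            rcases Finset.mem_insert.mp (step_keys_sub sb2 hm) with h | h
            · exact ind_key_ne hI (step_bal s1) (step_bal sa2) (h.trans kk1')
            · exact e1 h
      -- R, L
      · cases hInd with
        | p2k hk =>
            refine ⟨.par A2 B1, Step.parL' s2 ?_, Step.parR' s1 ?_⟩
            · intro hm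
              rcases Finset.mem_insert.mp (step_keys_sub s1 hm) with h | h
              · exact hk (h.symm)
              · exact e2 h
            · intro hm
              rcases Finset.mem_insert.mp (step_keys_sub s2 hm) with h | h
              · exact hk h
              · exact e1 h
      -- R, R
      · cases hInd with
        | p1 hI =>
            obtain ⟨Z, z1, z2⟩ := ihB hI s1 s2
            exact ⟨.par A Z, Step.parR' z1 e2, Step.parR' z2 e1⟩
      -- R, syn
      · cases hInd with
        | s1 hI =>
            obtain ⟨Z, z1, z2⟩ := ihB hI s1 sb2
            refine ⟨.par A2 Z, Step.syn' sa2 z1 p1' p2' t1' bar1' kk1', Step.parR' z2 ?_⟩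
            intro hm
            rcases Finset.mem_insert.mp (step_keys_sub sa2 hm) with h | h
            · exact ind_key_ne hI (step_bal s1) (step_bal sb2) (h.trans kk1'.symm)
            · exact e1 h
      -- syn, L
      · cases hInd with
        | s2 hI =>
            obtain ⟨Z, z1, z2⟩ := ihA hI sa1 s2
            refine ⟨.par Z B1, Step.parL' z1 ?_, Step.syn' z2 sb1 p1 p2 t1 bar1 kk1⟩
            intro hm
            rcases Finset.mem_insert.mp (step_keys_sub sb1 hm) with h | h
            · exact ind_key_ne hI (step_bal sa1) (step_bal s2) (kk1.symm.trans h.symm)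
            · exact e2 h
      -- syn, R
      · cases hInd with
        | s2 hI =>
            obtain ⟨Z, z1, z2⟩ := ihB hI sb1 s2
            refine ⟨.par A1 Z, Step.parR' z1 ?_, Step.syn' sa1 z2 p1 p2 t1 bar1 kk1⟩
            intro hm
            rcases Finset.mem_insert.mp (step_keys_sub sa1 hm) with h | h
            · exact ind_key_ne hI (step_bal sb1) (step_bal s2) (kk1.trans h.symm)
            · exact e2 h
      -- syn, syn
      · cases hInd with
        | s3 hI1 hI2 =>
            obtain ⟨ZA, za1, za2⟩ := ihA hI1 sa1 sa2
            obtain ⟨ZB, zb1, zb2⟩ := ihB hI2 sb1 sb2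
            exact ⟨.par ZA ZB, Step.syn' za1 zb1 p1' p2' t1' bar1' kk1',
              Step.syn' za2 zb2 p1 p2 t1 bar1 kk1⟩

/-! ### Backward transitions: determinism-style lemmas and BTI -/

/-- Prefix backward transitions with equal keys coincide. -/
lemma bwd_pre_unique : ∀ {X Y Y' : Proc} {θ θ' : PLab},
    Bwd X θ Y → Bwd X θ' Y' → θ.IsPre → θ'.IsPre → θ.key = θ'.key →
    θ = θ' ∧ Y = Y' := by
  intro X Y Y' θ θ' h
  induction h generalizing Y' θ' with
  | @act α X k hstd =>
      intro h' _ _ hk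
      cases h' with
      | act _ => exact ⟨rfl, rfl⟩
      | pre h2 hk2 => exact absurd (bwd_key_mem h2) (by simp [hstd, Proc.Std] at *)
  | @pre X' X θ α k h hk ih =>
      intro h' hp hp' hkk
      cases h' with
      | act hstd => exact absurd (bwd_key_mem h) (by simp [hstd, Proc.Std] at *)
      | pre h2 hk2 =>
          obtain ⟨e1, e2⟩ := ih h2 hp hp' hkk
          exact ⟨e1, by rw [e2]⟩
  | res h n1 n2 ih =>
      intro h' hp hp' hkk
      cases h' with
      | res h2 _ _ =>
          obtain ⟨e1, e2⟩ := ih h2 hp hp' hkk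
          exact ⟨e1, by rw [e2]⟩
  | @parL X' X Y θ h hk ih =>
      intro h' hp hp' hkk
      cases h' with
      | parL h2 hk2 =>
          obtain ⟨e1, e2⟩ := ih h2 hp hp' (by simpa [PLab.key] using hkk)
          exact ⟨by rw [e1], by rw [e2]⟩
      | parR h2 hk2 =>
          exact absurd (bwd_key_mem h2) (by simp [PLab.key] at hkk; rw [← hkk] at *; exact fun c => hk c)
      | syn h2 _ _ hp2 _ _ _ => exact absurd hp' (by simp [PLab.IsPre])
  | @parR X Y' Y θ h hk ih =>
      intro h' hp hp' hkk
      cases h' with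
      | parR h2 hk2 =>
          obtain ⟨e1, e2⟩ := ih h2 hp hp' (by simpa [PLab.key] using hkk)
          exact ⟨by rw [e1], by rw [e2]⟩
      | parL h2 hk2 =>
          exact absurd (bwd_key_mem h) (by simp [PLab.key] at hkk; rw [hkk] at *; exact fun c => hk2 c)
      | syn h2 _ _ hp2 _ _ _ => exact absurd hp' (by simp [PLab.IsPre])
  | syn _ _ _ _ _ _ _ _ _ => intro _ hp _ _; exact absurd hp (by simp [PLab.IsPre])
  | @sumL X' X Y θ h hk ih =>
      intro h' hp hp' hkk
      cases h' with
      | sumL h2 hk2 =>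
          obtain ⟨e1, e2⟩ := ih h2 hp hp' (by simpa [PLab.key] using hkk)
          exact ⟨by rw [e1], by rw [e2]⟩
      | sumR h2 hk2 =>
          exact absurd (bwd_key_mem h) (by simp [Proc.Std, hk2] at *)
  | @sumR X Y' Y θ h hk ih =>
      intro h' hp hp' hkk
      cases h' with
      | sumR h2 hk2 =>
          obtain ⟨e1, e2⟩ := ih h2 hp hp' (by simpa [PLab.key] using hkk)
          exact ⟨by rw [e1], by rw [e2]⟩
      | sumL h2 hk2 =>
          exact absurd (bwd_key_mem h2) (by simp [Proc.Std, hk] at *)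

lemma bwd_isPre {X Y : Proc} {θ : PLab} (h : Bwd X θ Y) (hp : θ.IsPre) : True := trivial

/-- BTI at the level of derivations: two coinitial backward transitions are equal
or have independent labels. -/
lemma bwd_bti : ∀ {X Y Y' : Proc} {θ θ' : PLab},
    Bwd X θ Y → Bwd X θ' Y' → (θ = θ' ∧ Y = Y') ∨ Ind θ θ' := by
  intro X Y Y' θ θ' h
  induction h generalizing Y' θ' with
  | @act α X k hstd =>
      intro h'
      cases h' with
      | act _ => exact .inl ⟨rfl, rfl⟩
      | pre h2 hk2 => exact absurd (bwd_key_mem h2) (by simp [hstd, Proc.Std] at *)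
  | @pre X' X θ α k h hk ih =>
      intro h'
      cases h' with
      | act hstd => exact absurd (bwd_key_mem h) (by simp [hstd, Proc.Std] at *)
      | pre h2 hk2 =>
          rcases ih h2 with ⟨e1, e2⟩ | hI
          · exact .inl ⟨e1, by rw [e2]⟩
          · exact .inr hI
  | res h n1 n2 ih =>
      intro h'
      cases h' with
      | res h2 _ _ =>
          rcases ih h2 with ⟨e1, e2⟩ | hI
          · exact .inl ⟨e1, by rw [e2]⟩
          · exact .inr hI
  | @parL X' X Y θ h hk ih =>
      intro h'
      cases h' with
      | parL h2 hk2 =>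
          rcases ih h2 with ⟨e1, e2⟩ | hI
          · exact .inl ⟨by rw [e1], by rw [e2]⟩
          · exact .inr (.p1 hI)
      | parR h2 hk2 =>
          refine .inr ?_
          have : θ.key ≠ _ := fun c => hk (c ▸ bwd_key_mem h2)
          exact Ind.p2k (d := .L) this
      | @syn _ _ _ _ θ1 θ2 h1 h2 hp1 hp2 ht hbar hkk =>
          refine .inr (Ind.s1 (d := .L) ?_)
          have hkne : θ.key ≠ θ1.key := fun c => hk (by rw [c, ← hkk]; exact bwd_key_mem h2)
          rcases ih h1 with ⟨e1, _⟩ | hI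
          · exact absurd (congrArg PLab.key e1) hkne
          · exact hI
  | @parR X Y' Y θ h hk ih =>
      intro h'
      cases h' with
      | parR h2 hk2 =>
          rcases ih h2 with ⟨e1, e2⟩ | hI
          · exact .inl ⟨by rw [e1], by rw [e2]⟩
          · exact .inr (.p1 hI)
      | parL h2 hk2 =>
          refine .inr ?_
          have : θ.key ≠ _ := fun c => hk (c ▸ bwd_key_mem h2)
          exact Ind.p2k (d := .R) this
      | @syn _ _ _ _ θ1 θ2 h1 h2 hp1 hp2 ht hbar hkk =>
          refine .inr (Ind.s1 (d := .R) ?_)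
          have hkne : θ.key ≠ θ2.key := fun c => hk (by rw [c, hkk]; exact bwd_key_mem h1)
          rcases ih h2 with ⟨e1, _⟩ | hI
          · exact absurd (congrArg PLab.key e1) hkne
          · exact hI
  | @syn X' X Yy' Yy θ1 θ2 h1 h2 hp1 hp2 ht hbar hkk ih1 ih2 =>
      intro h'
      cases h' with
      | @parL _ _ _ σ h3 hk3 =>
          refine .inr (Ind.s2 (d := .L) ?_)
          have hkne : θ1.key ≠ σ.key := fun c => hk3 (by rw [← c, ← hkk]; exact bwd_key_mem h2)
          rcases ih1 h3 with ⟨e1, _⟩ | hI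
          · exact absurd (congrArg PLab.key e1) hkne
          · exact hI
      | @parR _ _ _ σ h3 hk3 =>
          refine .inr (Ind.s2 (d := .R) ?_)
          have hkne : θ2.key ≠ σ.key := fun c => hk3 (by rw [← c, hkk]; exact bwd_key_mem h1)
          rcases ih2 h3 with ⟨e1, _⟩ | hI
          · exact absurd (congrArg PLab.key e1) hkne
          · exact hI
      | @syn _ _ _ _ θ1' θ2' h3 h4 hp1' hp2' ht' hbar' hkk' =>
          rcases ih1 h3 with ⟨e1, e2⟩ | hI1
          · subst e1
            obtain ⟨f1, f2⟩ := bwd_pre_unique h2 h4 hp2 hp2' (by rw [hkk, hkk'])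
            exact .inl ⟨by rw [f1], by rw [e2, f2]⟩
          · rcases ih2 h4 with ⟨e1, e2⟩ | hI2
            · subst e1
              obtain ⟨f1, f2⟩ := bwd_pre_unique h1 h3 hp1 hp1' (by rw [← hkk, ← hkk'])
              exact absurd (f1 ▸ hI1) (ind_irrefl _)
            · exact .inr (.s3 hI1 hI2)
  | @sumL X' X Y θ h hk ih =>
      intro h'
      cases h' with
      | sumL h2 hk2 =>
          rcases ih h2 with ⟨e1, e2⟩ | hI
          · exact .inl ⟨by rw [e1], by rw [e2]⟩
          · exact .inr (.c1 hI)
      | sumR h2 hk2 =>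
          exact absurd (bwd_key_mem h) (by simp [Proc.Std, hk2] at *)
  | @sumR X Y' Y θ h hk ih =>
      intro h'
      cases h' with
      | sumR h2 hk2 =>
          rcases ih h2 with ⟨e1, e2⟩ | hI
          · exact .inl ⟨by rw [e1], by rw [e2]⟩
          · exact .inr (.c1 hI)
      | sumL h2 hk2 =>
          exact absurd (bwd_key_mem h2) (by simp [Proc.Std, hk] at *)

/-! ### Reachability helpers -/

lemma Reach.trans : ∀ {X Y Z : Proc}, Reach X Y → Reach Y Z → Reach X Z := by
  intro X Y Z h
  induction h with
  | refl _ => exact fun h => h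
  | step s _ ih => exact fun h2 => .step s (ih h2)

lemma Reach.single {X Y : Proc} {b : Bool} {θ : PLab} (h : Step X b θ Y) : Reach X Y :=
  .step h (.refl Y)

lemma Tr.reach_of_valid {t : Tr} (h : t.Valid) : Reach t.src t.tgt := Reach.single h

lemma Tr.reach_rev_of_valid {t : Tr} (h : t.Valid) : Reach t.tgt t.src :=
  Reach.single (Step.rev h)

/-! ### Event equivalence helpers -/

lemma evEq_lbl {t u : Tr} (h : EvEq t u) : t.lbl = u.lbl := by
  induction h with
  | refl _ => rfl
  | symm _ ih => exact ih.symm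
  | trans _ _ ih1 ih2 => exact ih1.trans ih2
  | sq hsq _ => exact hsq.2.2.2.2.2.2.2.2.2.2.1.symm
  | sqrev hsq _ => exact hsq.2.2.2.2.2.2.2.2.2.2.1.symm

lemma evEq_valid {t u : Tr} (h : EvEq t u) : t.Valid ↔ u.Valid := by
  induction h with
  | refl _ => exact Iff.rfl
  | symm _ ih => exact ih.symm
  | trans _ _ ih1 ih2 => exact ih1.trans ih2
  | sq hsq _ => exact ⟨fun _ => hsq.2.2.2.1, fun _ => hsq.1⟩
  | @sqrev t u u' t' hsq _ =>
      refine ⟨fun _ => hsq.2.2.2.1, fun _ => ?_⟩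
      have := Tr.rev_valid (t := t) hsq.1
      exact this

lemma evEq_reach {t u : Tr} (h : EvEq t u) :
    Reach t.src u.src ∧ Reach u.src t.src ∧ Reach t.tgt u.tgt ∧ Reach u.tgt t.tgt := by
  induction h with
  | refl _ => exact ⟨.refl _, .refl _, .refl _, .refl _⟩
  | symm _ ih => exact ⟨ih.2.1, ih.1, ih.2.2.2, ih.2.2.1⟩
  | trans _ _ ih1 ih2 =>
      exact ⟨ih1.1.trans ih2.1, ih2.2.1.trans ih1.2.1, ih1.2.2.1.trans ih2.2.2.1,
        ih2.2.2.2.trans ih1.2.2.2⟩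
  | @sq t u u' t' hsq _ =>
      obtain ⟨tv, uv, u'v, t'v, e1, e2, e3, e4, _⟩ := hsq
      refine ⟨?_, ?_, ?_, ?_⟩
      · rw [e3, e1]; exact Tr.reach_of_valid uv
      · rw [e3, e1]; exact Tr.reach_rev_of_valid uv
      · rw [← e4, ← e2]; exact Tr.reach_of_valid u'v
      · rw [← e4, ← e2]; exact Tr.reach_rev_of_valid u'v
  | @sqrev t u u' t' hsq _ =>
      obtain ⟨tv, uv, u'v, t'v, e1, e2, e3, e4, _⟩ := hsq
      refine ⟨?_, ?_, ?_, ?_⟩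
      · show Reach t.tgt t'.src
        rw [e3]
        exact (Tr.reach_rev_of_valid tv).trans (by rw [e1]; exact Tr.reach_of_valid uv)
      · show Reach t'.src t.tgt
        rw [e3]
        refine (Tr.reach_rev_of_valid uv).trans ?_
        rw [← e1]; exact Tr.reach_of_valid tv
      · show Reach t.src t'.tgt
        rw [← e4]
        refine (Tr.reach_of_valid tv).trans ?_
        rw [← e2]; exact Tr.reach_of_valid u'v
      · show Reach t'.tgt t.src
        rw [← e4]
        refine (Tr.reach_rev_of_valid u'v).trans ?_
        rw [e2]; exact Tr.reach_rev_of_valid tv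

/-! ### Well-foundedness helper -/

/-- The number of keyed prefixes in a process. -/
def numKeyed : Proc → ℕ
  | .nil => 0
  | .pre _ X => numKeyed X
  | .res X _ => numKeyed X
  | .sum X Y => numKeyed X + numKeyed Y
  | .par X Y => numKeyed X + numKeyed Y
  | .keyed _ _ X => numKeyed X + 1

lemma fwd_numKeyed {X Y : Proc} {θ : PLab} (h : Fwd X θ Y) : numKeyed X < numKeyed Y := by
  induction h with
  | act _ => simp [numKeyed]
  | pre _ _ ih => simpa [numKeyed] using ih
  | res _ _ _ ih => simpa [numKeyed] using ih
  | parL _ _ ih => simp [numKeyed]; omega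
  | parR _ _ ih => simp [numKeyed]; omega
  | syn _ _ _ _ _ _ _ ih1 ih2 => simp [numKeyed]; omega
  | sumL _ _ ih => simp [numKeyed]; omega
  | sumR _ _ ih => simp [numKeyed]; omega

end Aux

/-- **The axiomatic approach is applicable to the LTSI of CCSKP.** With independence
given by connectedness plus independence of proof keyed labels, the LTSI of CCSKP
(on reachable processes) has an irreflexive and symmetric independence relation and
satisfies SP, BTI, WF, PCI, IRE and RPI; in particular it is pre-reversible. -/
theorem axioms_hold_ccskp :
    -- independence is irreflexive
    (∀ t : Tr, ¬ t.ind t) ∧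
    -- independence is symmetric
    (∀ t u : Tr, t.ind u → u.ind t) ∧
    -- SP
    (∀ t u : Tr, Reachable t.src → t.Valid → u.Valid → t.src = u.src → t.ind u →
      ∃ u' t' : Tr, Square t u u' t') ∧
    -- BTI
    (∀ t u : Tr, Reachable t.src → t.Valid → u.Valid → t.src = u.src →
      t.fwd? = false → u.fwd? = false → t ≠ u → t.ind u) ∧
    -- WF
    (∀ (Ps : ℕ → Proc) (θs : ℕ → PLab), ¬ ∀ i : ℕ, Fwd (Ps (i + 1)) (θs i) (Ps i)) ∧
    -- PCI
    (∀ t u u' t' : Tr, Reachable t.src → Square t u u' t' → t.ind u → u'.ind t.rev) ∧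
    -- IRE
    (∀ t t' u : Tr, EvEq t t' → t'.ind u → t.ind u) ∧
    -- RPI
    (∀ t t' : Tr, t.ind t' → t.rev.ind t') := by
  refine ⟨?_, ?_, ?_, ?_, ?_, ?_, ?_, ?_⟩
  -- irreflexivity
  · rintro t ⟨_, _, _, hI⟩
    exact ind_irrefl _ hI
  -- symmetry
  · rintro t u ⟨tv, uv, hc, hI⟩
    exact ⟨uv, tv, hc.symm, ind_symm hI⟩
  -- SP
  · rintro t u _ tv uv hsrc ⟨_, _, _, hI⟩
    have uv' : Step t.src u.fwd? u.lbl u.tgt := hsrc ▸ uv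
    obtain ⟨Z, z1, z2⟩ := sp_core t.src hI tv uv'
    exact ⟨⟨t.tgt, u.fwd?, u.lbl, Z⟩, ⟨u.tgt, t.fwd?, t.lbl, Z⟩,
      tv, uv, z1, z2, hsrc, rfl, rfl, rfl, rfl, rfl, rfl, rfl⟩
  -- BTI
  · rintro t u _ tv uv hsrc hft hfu hne
    have tb : Bwd t.src t.lbl t.tgt := step_false.mp (hft ▸ tv)
    have ub : Bwd t.src u.lbl u.tgt := step_false.mp (hfu ▸ hsrc ▸ uv)
    rcases bwd_bti tb ub with ⟨e1, e2⟩ | hI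
    · exact absurd (by cases t; cases u; simp_all) hne
    · refine ⟨tv, uv, Or.inl ?_, hI⟩
      exact Reach.single (show Step t.src u.fwd? u.lbl u.tgt from hsrc ▸ uv)
  -- WF
  · intro Ps θs h
    have key : ∀ n, numKeyed (Ps n) + n ≤ numKeyed (Ps 0) := by
      intro n
      induction n with
      | zero => simp
      | succ n ih => have h2 := fwd_numKeyed (h n); omega
    have := key (numKeyed (Ps 0) + 1)
    omega
  -- PCI
  · rintro t u u' t' _ hsq ⟨tv, uv, _, hI⟩
    obtain ⟨_, _, u'v, _, e1, e2, e3, e4, e5, _, _, _⟩ := hsq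
    refine ⟨u'v, Tr.rev_valid tv, Or.inl ?_, ?_⟩
    · show Reach u'.src t.src
      rw [e2]
      exact Tr.reach_rev_of_valid tv
    · show Ind u'.lbl t.lbl
      rw [e5]
      exact ind_symm hI
  -- IRE
  · rintro t t' u heq ⟨t'v, uv, hc, hI⟩
    obtain ⟨r1, r2, r3, r4⟩ := evEq_reach heq
    refine ⟨(evEq_valid heq).mpr t'v, uv, ?_, by rw [evEq_lbl heq]; exact hI⟩
    rcases hc with h | h
    · exact Or.inl (r1.trans h)
    · exact Or.inr (h.trans r4)
  -- RPI
  · rintro t t' ⟨tv, t'v, hc, hI⟩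
    refine ⟨Tr.rev_valid tv, t'v, ?_, hI⟩
    rcases hc with h | h
    · exact Or.inl ((Tr.reach_rev_of_valid tv).trans h)
    · exact Or.inr (h.trans (Tr.reach_rev_of_valid tv))

end CCSKP
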